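/- arXiv:1012.1578 — 2 statements merged into one kernel-verified Lean document; each statement's English description precedes it below -/
import Mathlib

section
/- The hyperspace C([0,∞)) of nonempty closed connected subsets of the ray [0,∞), with the topology induced by the (extended-real-valued) Hausdorff distance, is homeomorphic to the disjoint union T^∞ ⊔ [0,∞), where T^∞ = {(a,b) ∈ ℝ² : 0 ≤ a ≤ b}, via the map sending [a,b] to (a,b) ∈ T^∞ and [a,∞) to a ∈ [0,∞). -/
open Set TopologicalSpace

/-- The hyperspace `C([0,∞))` of nonempty closed connected subsets of the ray `[0,∞)`,
with the topology induced by the (extended-real-valued) Hausdorff distance. -/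
def CRay : Type := {A : Closeds ℝ // IsConnected (A : Set ℝ) ∧ (A : Set ℝ) ⊆ Ici (0:ℝ)}

noncomputable instance : EMetricSpace CRay := by unfold CRay; infer_instance

/-- The infinite triangle `T^∞ = {(a,b) ∈ ℝ² : 0 ≤ a ≤ b}`. -/
def TriInf : Type := {p : ℝ × ℝ // 0 ≤ p.1 ∧ p.1 ≤ p.2}

noncomputable instance : MetricSpace TriInf := by unfold TriInf; infer_instance

/-!
A nonempty closed connected subset of the ray is `[a, b]` or `[a, ∞)` with `0 ≤ a`. The Hausdorff
distance between two such intervals is the larger of the distances between corresponding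
endpoints: clamping a point into the other interval moves it by at most that much, and an extreme
point lies at least the distance between the extreme points away from the other set. In
particular `(a, b) ↦ [a, b]` and `a ↦ [a, ∞)` are isometric embeddings, onto the bounded and the
unbounded sets respectively. Sets at finite Hausdorff distance from a bounded set are bounded,
so these two pieces are clopen, and the two embeddings glue to a homeomorphism.
-/

open Metric Bornology Topology

theorem IsPreconnected.eq_Ici_csInf {α : Type*} [ConditionallyCompleteLinearOrder α]
    [TopologicalSpace α] [OrderTopology α] {s : Set α} (hc : IsPreconnected s)
    (hb : BddBelow s) (ha : ¬BddAbove s) (hcl : IsClosed s) : s = Ici (sInf s) := by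
  refine Subset.antisymm (fun x hx => csInf_le hb hx) fun x hx => ?_
  rcases (mem_Ici.1 hx).eq_or_lt with rfl | hlt
  · exact hcl.csInf_mem (nonempty_of_not_bddAbove ha) hb
  · exact hc.Ioi_csInf_subset hb ha hlt

theorem Bornology.IsBounded.of_hausdorffEDist_ne_top {X : Type*} [PseudoMetricSpace X]
    {s t : Set X} (hs : IsBounded s) (hst : hausdorffEDist s t ≠ ⊤) : IsBounded t := by
  refine (hs.cthickening (δ := (hausdorffEDist s t).toReal)).subset fun y hy => ?_
  rw [mem_cthickening_iff, ENNReal.ofReal_toReal hst, hausdorffEDist_comm]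
  exact infEDist_le_hausdorffEDist_of_mem hy

theorem isClopen_of_edist_ne_top {X : Type*} [PseudoEMetricSpace X] {s : Set X}
    (hs : ∀ x ∈ s, ∀ y, edist x y ≠ ⊤ → y ∈ s) : IsClopen s := by
  refine ⟨⟨EMetric.isOpen_iff.2 fun y hy => ⟨⊤, ENNReal.zero_lt_top, fun z hz hzs => ?_⟩⟩,
    EMetric.isOpen_iff.2 fun x hx => ⟨⊤, ENNReal.zero_lt_top, fun y hy => ?_⟩⟩
  · exact hy (hs z hzs y (mem_eball.1 hz).ne)
  · exact hs x hx y (mem_eball'.1 hy).ne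

namespace Real

theorem edist_le_infEDist_of_forall_mem_uIcc {x c : ℝ} {s : Set ℝ}
    (h : ∀ y ∈ s, c ∈ uIcc x y) : edist x c ≤ infEDist x s :=
  le_infEDist.2 fun y hy => by
    simpa only [edist_dist] using ENNReal.ofReal_le_ofReal (dist_left_le_of_mem_uIcc (h y hy))

theorem edist_le_hausdorffEDist_of_isLeast {a c : ℝ} {s t : Set ℝ} (ha : IsLeast s a)
    (hc : IsLeast t c) : edist a c ≤ hausdorffEDist s t := by
  wlog hac : a ≤ c generalizing a c s t
  · rw [edist_comm, hausdorffEDist_comm]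
    exact this hc ha (le_of_not_ge hac)
  have hc_between : ∀ y ∈ t, c ∈ uIcc a y := fun y hy => Icc_subset_uIcc ⟨hac, hc.2 hy⟩
  exact (edist_le_infEDist_of_forall_mem_uIcc hc_between).trans
    (infEDist_le_hausdorffEDist_of_mem ha.1)

theorem edist_le_hausdorffEDist_of_isGreatest {b d : ℝ} {s t : Set ℝ} (hb : IsGreatest s b)
    (hd : IsGreatest t d) : edist b d ≤ hausdorffEDist s t := by
  wlog hdb : d ≤ b generalizing b d s t
  · rw [edist_comm, hausdorffEDist_comm]
    exact this hd hb (le_of_not_ge hdb)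
  have hd_between : ∀ y ∈ t, d ∈ uIcc b y := fun y hy => Icc_subset_uIcc' ⟨hd.2 hy, hdb⟩
  exact (edist_le_infEDist_of_forall_mem_uIcc hd_between).trans
    (infEDist_le_hausdorffEDist_of_mem hb.1)

theorem exists_mem_Icc_edist_le {a b c d x : ℝ} (hx : x ∈ Icc a b) (hcd : c ≤ d) :
    ∃ y ∈ Icc c d, edist x y ≤ max (edist a c) (edist b d) := by
  refine ⟨max c (min d x), ⟨le_max_left _ _, max_le hcd (min_le_left _ _)⟩, ?_⟩
  simp only [edist_dist, Real.dist_eq, ← ENNReal.ofReal_max]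
  apply ENNReal.ofReal_le_ofReal
  grind [abs_le]

theorem exists_mem_Ici_edist_le {a c x : ℝ} (hx : a ≤ x) :
    ∃ y ∈ Ici c, edist x y ≤ edist a c := by
  refine ⟨max c x, le_max_left c x, ?_⟩
  simp only [edist_dist, Real.dist_eq]
  apply ENNReal.ofReal_le_ofReal
  grind [abs_le, le_abs_self]

theorem hausdorffEDist_Icc {a b c d : ℝ} (hab : a ≤ b) (hcd : c ≤ d) :
    hausdorffEDist (Icc a b) (Icc c d) = max (edist a c) (edist b d) := by
  refine le_antisymm (hausdorffEDist_le_of_mem_edist (fun x hx => exists_mem_Icc_edist_le hx hcd)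
    fun y hy => ?_) (max_le (edist_le_hausdorffEDist_of_isLeast (isLeast_Icc hab) (isLeast_Icc hcd))
      (edist_le_hausdorffEDist_of_isGreatest (isGreatest_Icc hab) (isGreatest_Icc hcd)))
  simpa only [edist_comm c a, edist_comm d b] using exists_mem_Icc_edist_le hy hab

theorem hausdorffEDist_Ici (a c : ℝ) : hausdorffEDist (Ici a) (Ici c) = edist a c := by
  refine le_antisymm (hausdorffEDist_le_of_mem_edist (fun x hx => exists_mem_Ici_edist_le hx)
    fun y hy => ?_) (edist_le_hausdorffEDist_of_isLeast isLeast_Ici isLeast_Ici)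
  simpa only [edist_comm c a] using exists_mem_Ici_edist_le (c := a) hy

end Real

namespace CRay

def ofIcc (p : TriInf) : CRay :=
  ⟨⟨Icc p.1.1 p.1.2, isClosed_Icc⟩, ⟨nonempty_Icc.2 p.2.2, isPreconnected_Icc⟩,
    Icc_subset_Ici_self.trans (Ici_subset_Ici.2 p.2.1)⟩

def ofIci (a : {x : ℝ // 0 ≤ x}) : CRay :=
  ⟨⟨Ici a.1, isClosed_Ici⟩, ⟨nonempty_Ici, isPreconnected_Ici⟩, Ici_subset_Ici.2 a.2⟩

theorem isometry_ofIcc : Isometry ofIcc := fun p q =>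
  (Real.hausdorffEDist_Icc p.2.2 q.2.2).trans (Prod.edist_eq p.1 q.1).symm

theorem isometry_ofIci : Isometry ofIci := fun a b => Real.hausdorffEDist_Ici a.1 b.1

theorem sInf_nonneg (A : CRay) : 0 ≤ sInf (A.1 : Set ℝ) :=
  le_csInf A.2.1.nonempty fun _ hx => A.2.2 hx

theorem isBounded_ofIcc (p : TriInf) : IsBounded ((ofIcc p).1 : Set ℝ) := isBounded_Icc _ _

theorem not_isBounded_ofIci (a : {x : ℝ // 0 ≤ x}) : ¬IsBounded ((ofIci a).1 : Set ℝ) :=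
  fun h => not_bddAbove_Ici a.1 h.bddAbove

theorem isClopen_setOf_isBounded : IsClopen {A : CRay | IsBounded (A.1 : Set ℝ)} :=
  isClopen_of_edist_ne_top fun A (hA : IsBounded (A.1 : Set ℝ)) _ hAB =>
    hA.of_hausdorffEDist_ne_top hAB

theorem range_ofIcc : range ofIcc = {A : CRay | IsBounded (A.1 : Set ℝ)} := by
  refine Subset.antisymm (range_subset_iff.2 isBounded_ofIcc) fun A hA => ?_
  obtain ⟨hbb, hba⟩ : BddBelow (A.1 : Set ℝ) ∧ BddAbove (A.1 : Set ℝ) :=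
    isBounded_iff_bddBelow_bddAbove.1 hA
  refine ⟨⟨(sInf (A.1 : Set ℝ), sSup (A.1 : Set ℝ)), A.sInf_nonneg,
    csInf_le_csSup A.2.1.nonempty hbb hba⟩, Subtype.ext (Closeds.ext ?_)⟩
  exact (eq_Icc_csInf_csSup_of_connected_bdd_closed A.2.1 hbb hba A.1.isClosed).symm

theorem range_ofIci : range ofIci = {A : CRay | IsBounded (A.1 : Set ℝ)}ᶜ := by
  refine Subset.antisymm (range_subset_iff.2 not_isBounded_ofIci) fun A hA => ?_
  have hbb : BddBelow (A.1 : Set ℝ) := bddBelow_Ici.mono A.2.2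
  have hba : ¬BddAbove (A.1 : Set ℝ) := fun hba =>
    hA (isBounded_iff_bddBelow_bddAbove.2 ⟨hbb, hba⟩)
  refine ⟨⟨sInf (A.1 : Set ℝ), A.sInf_nonneg⟩, Subtype.ext (Closeds.ext ?_)⟩
  exact (A.2.1.isPreconnected.eq_Ici_csInf hbb hba A.1.isClosed).symm

theorem isOpenEmbedding_sumElim : IsOpenEmbedding (Sum.elim ofIcc ofIci) :=
  .sumElim ⟨isometry_ofIcc.isEmbedding, range_ofIcc ▸ isClopen_setOf_isBounded.isOpen⟩
    ⟨isometry_ofIci.isEmbedding, range_ofIci ▸ isClopen_setOf_isBounded.compl.isOpen⟩ <|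
    Sum.elim_injective.2 ⟨isometry_ofIcc.injective, isometry_ofIci.injective,
      fun p a h => not_isBounded_ofIci a (h ▸ isBounded_ofIcc p)⟩

theorem surjective_sumElim : Function.Surjective (Sum.elim ofIcc ofIci) := by
  rw [← range_eq_univ, Sum.elim_range, range_ofIcc, range_ofIci, union_compl_self]

noncomputable def homeomorphSum : TriInf ⊕ {x : ℝ // 0 ≤ x} ≃ₜ CRay :=
  (Equiv.ofBijective _ ⟨isOpenEmbedding_sumElim.injective, surjective_sumElim⟩)
    |>.toHomeomorphOfIsInducing isOpenEmbedding_sumElim.isInducing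

end CRay

/-- `C([0,∞))` with the extended Hausdorff metric topology is homeomorphic to the
disjoint union `T^∞ ⊔ [0,∞)`, via `[a,b] ↦ (a,b) ∈ T^∞` and `[a,∞) ↦ a ∈ [0,∞)`. -/
theorem stmt_3 :
    ∃ h : CRay ≃ₜ (TriInf ⊕ {x : ℝ // 0 ≤ x}),
      (∀ (a b : ℝ) (h0 : 0 ≤ a) (hab : a ≤ b),
        h ⟨⟨Icc a b, isClosed_Icc⟩,
            ⟨(nonempty_Icc.2 hab), isPreconnected_Icc⟩,
            Icc_subset_Ici_self.trans (Ici_subset_Ici.2 h0)⟩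
          = Sum.inl ⟨(a, b), h0, hab⟩) ∧
      (∀ (a : ℝ) (h0 : 0 ≤ a),
        h ⟨⟨Ici a, isClosed_Ici⟩,
            ⟨nonempty_Ici, isPreconnected_Ici⟩,
            Ici_subset_Ici.2 h0⟩
          = Sum.inr ⟨a, h0⟩) :=
  ⟨CRay.homeomorphSum.symm, fun _ _ _ _ => CRay.homeomorphSum.symm_apply_eq.2 rfl,
    fun _ _ => CRay.homeomorphSum.symm_apply_eq.2 rfl⟩
end

section
/- In the hyperspace CL([0,∞)) with the Vietoris topology, the map γ defined by γ(t) = [0, t/(1−t)] for t ∈ [0,1) and γ(1) = [0,∞) is continuous. -/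
open Set

/-- The hyperspace `CL([0,∞))` of nonempty closed subsets of the ray `[0,∞)`,
viewed as subsets of `ℝ` contained in `[0,∞)`. -/
def CLRay : Type := {A : Set ℝ // A.Nonempty ∧ IsClosed A ∧ A ⊆ Ici (0:ℝ)}

/-- The Vietoris topology on `CL([0,∞))`, generated by the subbasic sets
`U⁺ = {A : A ⊆ U}` and `V⁻ = {A : A ∩ V ≠ ∅}` for `U`, `V` open in `[0,∞)`
(i.e. relatively open subsets of the ray). -/
instance : TopologicalSpace CLRay :=
  TopologicalSpace.generateFrom
    ({S | ∃ U : Set ℝ, (∃ W : Set ℝ, IsOpen W ∧ U = W ∩ Ici 0) ∧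
        S = {A : CLRay | A.1 ⊆ U}} ∪
     {S | ∃ V : Set ℝ, (∃ W : Set ℝ, IsOpen W ∧ V = W ∩ Ici 0) ∧
        S = {A : CLRay | (A.1 ∩ V).Nonempty}})

/-- The map `γ(t) = [0, t/(1−t)]` for `t < 1` and `γ(1) = [0,∞)`. -/
noncomputable def g17 (t : unitInterval) : CLRay :=
  if h : (t : ℝ) = 1 then ⟨Ici 0, nonempty_Ici, isClosed_Ici, subset_rfl⟩
  else
    ⟨Icc 0 ((t : ℝ) / (1 - t)),
      nonempty_Icc.2 (div_nonneg t.2.1 (by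
        have h1 : (t : ℝ) < 1 := lt_of_le_of_ne t.2.2 h
        linarith)),
      isClosed_Icc, Icc_subset_Ici_self⟩

lemma g17_val_of_ne (t : unitInterval) (h : (t:ℝ) ≠ 1) :
    (g17 t).1 = Icc 0 ((t:ℝ)/(1-(t:ℝ))) := by
  simp [g17, h]

lemma g17_val_of_eq (t : unitInterval) (h : (t:ℝ) = 1) :
    (g17 t).1 = Ici 0 := by
  simp [g17, h]

lemma aux2 (c : ℝ) (hc : 0 ≤ c) (s : unitInterval) :
    (s:ℝ) < c / (1 + c) ↔ ((s:ℝ) < 1 ∧ (s:ℝ) / (1 - (s:ℝ)) < c) := by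
  have h1 : (0:ℝ) < 1 + c := by linarith
  rw [lt_div_iff₀ h1]
  constructor
  · intro h
    have hs0 : (0:ℝ) ≤ s := s.2.1
    have hs1 : (s:ℝ) < 1 := by nlinarith
    refine ⟨hs1, ?_⟩
    rw [div_lt_iff₀ (by linarith : (0:ℝ) < 1 - (s:ℝ))]
    nlinarith
  · rintro ⟨hs1, h⟩
    rw [div_lt_iff₀ (by linarith : (0:ℝ) < 1 - (s:ℝ))] at h
    nlinarith

lemma aux1 (c : ℝ) (hc : 0 ≤ c) (s : unitInterval) :
    c / (1 + c) < (s:ℝ) ↔ ((s:ℝ) = 1 ∨ c < (s:ℝ) / (1 - (s:ℝ))) := by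
  have h1 : (0:ℝ) < 1 + c := by linarith
  rw [div_lt_iff₀ h1]
  constructor
  · intro h
    by_cases he : (s:ℝ) = 1
    · exact Or.inl he
    · right
      have hs1 : (s:ℝ) < 1 := lt_of_le_of_ne s.2.2 he
      rw [lt_div_iff₀ (by linarith : (0:ℝ) < 1 - (s:ℝ))]
      nlinarith
  · rintro (he | h)
    · rw [he]; linarith
    · have he : (s:ℝ) ≠ 1 := by
        intro he
        rw [he] at h
        simp at h
        linarith
      have hs1 : (s:ℝ) < 1 := lt_of_le_of_ne s.2.2 he
      rw [lt_div_iff₀ (by linarith : (0:ℝ) < 1 - (s:ℝ))] at h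
      nlinarith

/-- In `CL([0,∞))` with the Vietoris topology, the map `γ(t) = [0, t/(1−t)]`
(`γ(1) = [0,∞)`) is continuous. -/
theorem stmt_17 : Continuous g17 := by
  apply continuous_generateFrom_iff.mpr
  rintro S (⟨U, ⟨W, hW, rfl⟩, rfl⟩ | ⟨V, ⟨W, hW, rfl⟩, rfl⟩)
  · -- U⁺ case
    rw [isOpen_iff_mem_nhds]
    intro t ht
    simp only [mem_preimage, mem_setOf_eq] at ht
    by_cases h1 : (t:ℝ) = 1
    · rw [g17_val_of_eq t h1] at ht
      filter_upwards with s
      show (g17 s).1 ⊆ W ∩ Ici 0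
      exact fun x hx => ht ((g17 s).2.2.2 hx)
    · have ht1 : (t:ℝ) < 1 := lt_of_le_of_ne t.2.2 h1
      rw [g17_val_of_ne t h1] at ht
      set b := (t:ℝ)/(1-(t:ℝ)) with hb
      have hb0 : 0 ≤ b := div_nonneg t.2.1 (by linarith)
      have hsub : Icc 0 b ⊆ W := fun x hx => (ht hx).1
      obtain ⟨δ, hδ, hth⟩ := isCompact_Icc.exists_thickening_subset_open hW hsub
      have hsub2 : Icc 0 (b + δ/2) ⊆ W := by
        intro x hx
        apply hth
        rw [Metric.mem_thickening_iff]
        rcases le_or_gt x b with h | h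
        · exact ⟨x, ⟨hx.1, h⟩, by simp [hδ]⟩
        · refine ⟨b, ⟨hb0, le_refl b⟩, ?_⟩
          rw [Real.dist_eq, abs_of_pos (by linarith)]
          have := hx.2
          linarith
      set c := b + δ/2 with hc
      have hc0 : 0 ≤ c := by simp only [hc]; linarith
      refine mem_nhds_iff.mpr ⟨{s : unitInterval | (s:ℝ) < c/(1+c)}, ?_, ?_, ?_⟩
      · intro s hs
        obtain ⟨hs1, hsf⟩ := (aux2 c hc0 s).1 hs
        show (g17 s).1 ⊆ W ∩ Ici 0
        rw [g17_val_of_ne s (ne_of_lt hs1)]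
        intro x hx
        exact ⟨hsub2 ⟨hx.1, hx.2.trans hsf.le⟩, hx.1⟩
      · exact isOpen_Iio.preimage continuous_subtype_val
      · exact (aux2 c hc0 t).2 ⟨ht1, by simp only [hc, ← hb]; linarith⟩
  · -- V⁻ case
    rw [isOpen_iff_mem_nhds]
    intro t ht
    simp only [mem_preimage, mem_setOf_eq] at ht
    obtain ⟨x, hxg, hxW, hx0⟩ := ht
    by_cases h0 : (0:ℝ) ∈ W
    · filter_upwards with s
      refine ⟨0, ?_, h0, self_mem_Ici⟩
      by_cases hs : (s:ℝ) = 1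
      · rw [g17_val_of_eq s hs]; exact self_mem_Ici
      · rw [g17_val_of_ne s hs]
        have hs1 : (s:ℝ) < 1 := lt_of_le_of_ne s.2.2 hs
        exact ⟨le_refl 0, div_nonneg s.2.1 (by linarith)⟩
    · have hx0' : 0 < x := lt_of_le_of_ne hx0 (by rintro rfl; exact h0 hxW)
      obtain ⟨ε, hε, hball⟩ := Metric.isOpen_iff.1 hW x hxW
      set x' := max (x - ε/2) (x/2) with hx'
      have hx'x : x' < x := max_lt (by linarith) (by linarith)
      have hx'0 : 0 < x' := lt_of_lt_of_le (by linarith) (le_max_right _ _)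
      have hx'W : x' ∈ W := by
        apply hball
        rw [Metric.mem_ball, Real.dist_eq, abs_of_nonpos (by linarith)]
        have : x - ε/2 ≤ x' := le_max_left _ _
        linarith
      have hkey : (t:ℝ) = 1 ∨ x' < (t:ℝ)/(1-(t:ℝ)) := by
        by_cases h1 : (t:ℝ) = 1
        · exact Or.inl h1
        · right
          rw [g17_val_of_ne t h1] at hxg
          exact lt_of_lt_of_le hx'x hxg.2
      refine mem_nhds_iff.mpr ⟨{s : unitInterval | x'/(1+x') < (s:ℝ)}, ?_,
        isOpen_Ioi.preimage continuous_subtype_val, (aux1 x' hx'0.le t).2 hkey⟩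
      intro s hs
      obtain h | h := (aux1 x' hx'0.le s).1 hs
      · exact ⟨x', by rw [g17_val_of_eq s h]; exact hx'0.le, hx'W, hx'0.le⟩
      · have hs1 : (s:ℝ) ≠ 1 := by
          intro he
          rw [he] at h
          simp at h
          linarith
        refine ⟨x', ?_, hx'W, hx'0.le⟩
        rw [g17_val_of_ne s hs1]
        exact ⟨hx'0.le, h.le⟩
end
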